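/- arXiv:2302.04462 — 7 statements merged into one kernel-verified Lean document; each statement's English description precedes it below -/
import Mathlib

section
/- Let X, X_1, ..., X_n be positive semidefinite matrices with X ⪯ X_1 + ... + X_n. Then for any integer t ≥ 1, tr(X^t) ≤ n^{t-1}(tr(X_1^t) + ... + tr(X_n^t)). -/
/-!
Diagonalize `X = U diag(λ) Uᴴ` and look at everything in the eigenbasis of `X`. There
`tr X^t = ∑ λ_i^t`, and the Loewner inequality read on the diagonal gives `λ_i ≤ ∑_k (X_k)_ii`.
The power-mean inequality turns `(∑_k (X_k)_ii)^t` into at most `n^(t-1) ∑_k (X_k)_ii^t`, and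
`(A_ii)^t ≤ (A^t)_ii` for every PSD `A`, by Jensen, since `A_ii` is a convex combination of the
eigenvalues of `A` with the weights `U_ij²`. Summing over `i` gives the traces of the `X_k^t`.
-/

open Finset Unitary

namespace Matrix

variable {ι κ : Type*} [Fintype ι] [DecidableEq ι]

theorem trace_conjStarAlgAut {R : Type*} [CommRing R] [StarRing R]
    (U : unitaryGroup ι R) (A : Matrix ι ι R) :
    (conjStarAlgAut R _ U A).trace = A.trace := by
  rw [conjStarAlgAut_apply, trace_mul_cycle, coe_star_mul_self, one_mul]

theorem mul_diagonal_mul_star_apply_self (U : Matrix ι ι ℝ) (d : ι → ℝ) (i : ι) :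
    (U * diagonal d * star U) i i = ∑ j, U i j ^ 2 * d j := by
  rw [mul_apply]
  simp only [mul_diagonal, star_apply, star_trivial]
  exact sum_congr rfl fun j _ => by ring

theorem PosSemidef.pow_diag_le_diag_pow {A : Matrix ι ι ℝ} (hA : A.PosSemidef) (i : ι) (t : ℕ) :
    A i i ^ t ≤ (A ^ t) i i := by
  set U : Matrix ι ι ℝ := (hA.1.eigenvectorUnitary : Matrix ι ι ℝ)
  set ev := hA.1.eigenvalues
  have hspec (s : ℕ) : A ^ s = U * diagonal (ev ^ s) * star U := by
    rw [hA.1.spectral_theorem, ← map_pow, diagonal_pow]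
    rfl
  have hdiag (s : ℕ) : (A ^ s) i i = ∑ j, U i j ^ 2 * ev j ^ s := by
    rw [hspec, mul_diagonal_mul_star_apply_self]
    rfl
  have hdiag_one : A i i = ∑ j, U i j ^ 2 * ev j := by
    simpa only [pow_one] using hdiag 1
  have hweights : ∑ j, U i j ^ 2 = 1 := by
    simpa [U, eq_comm] using mul_diagonal_mul_star_apply_self U 1 i
  rw [hdiag_one, hdiag]
  simpa only [smul_eq_mul] using (convexOn_pow t).map_sum_le (t := univ) (p := ev)
    (fun j _ => sq_nonneg (U i j)) hweights (fun j _ => hA.eigenvalues_nonneg j)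

theorem sum_diag_pow_le_card_pow_mul_sum_trace_pow [Fintype κ] {X : Matrix ι ι ℝ}
    {Xs : κ → Matrix ι ι ℝ} (hX : X.PosSemidef) (hXs : ∀ k, (Xs k).PosSemidef)
    (hle : ((∑ k, Xs k) - X).PosSemidef) (s : ℕ) :
    ∑ i, X i i ^ (s + 1) ≤ (Fintype.card κ : ℝ) ^ s * ∑ k, (Xs k ^ (s + 1)).trace := by
  have hdiag_le (i : ι) : X i i ≤ ∑ k, Xs k i i := by
    simpa [sub_nonneg, Matrix.sum_apply] using hle.diag_nonneg (i := i)
  calc ∑ i, X i i ^ (s + 1) ≤ ∑ i, (∑ k, Xs k i i) ^ (s + 1) := by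
        gcongr with i
        exacts [hX.diag_nonneg, hdiag_le i]
    _ ≤ ∑ i, (Fintype.card κ : ℝ) ^ s * ∑ k, Xs k i i ^ (s + 1) := by
        gcongr with i
        simpa only [card_univ] using
          pow_sum_le_card_mul_sum_pow (s := univ) (fun k _ => (hXs k).diag_nonneg (i := i)) s
    _ ≤ ∑ i, (Fintype.card κ : ℝ) ^ s * ∑ k, (Xs k ^ (s + 1)) i i := by
        gcongr with i k
        exact (hXs k).pow_diag_le_diag_pow i _
    _ = _ := by
        rw [← mul_sum, sum_comm]
        rfl

end Matrix

open Matrix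

theorem trace_power_sum_bound
    {m n : ℕ} (X : Matrix (Fin m) (Fin m) ℝ)
    (Xs : Fin n → Matrix (Fin m) (Fin m) ℝ)
    (hX : X.PosSemidef) (hXs : ∀ i, (Xs i).PosSemidef)
    (hle : ((∑ i, Xs i) - X).PosSemidef)
    (t : ℕ) (ht : 1 ≤ t) :
    (X ^ t).trace ≤ (n : ℝ) ^ (t - 1) * ∑ i, ((Xs i) ^ t).trace := by
  obtain ⟨s, rfl⟩ := Nat.exists_eq_add_of_le' ht
  let φ := conjStarAlgAut ℝ (Matrix (Fin m) (Fin m) ℝ) (star hX.1.eigenvectorUnitary)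
  have hφ_psd {A : Matrix (Fin m) (Fin m) ℝ} (hA : A.PosSemidef) : (φ A).PosSemidef := by
    simpa [φ, star_eq_conjTranspose] using hA.conjTranspose_mul_mul_same _
  have hφ_trace (A : Matrix (Fin m) (Fin m) ℝ) : (φ A ^ (s + 1)).trace = (A ^ (s + 1)).trace := by
    rw [← map_pow, trace_conjStarAlgAut]
  have hφX : φ X = diagonal hX.1.eigenvalues := by
    simpa [φ] using hX.1.conjStarAlgAut_star_eigenvectorUnitary
  calc (X ^ (s + 1)).trace = ∑ i, φ X i i ^ (s + 1) := by
        rw [← hφ_trace, hφX, diagonal_pow, trace_diagonal]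
        simp
    _ ≤ (Fintype.card (Fin n) : ℝ) ^ s * ∑ i, (φ (Xs i) ^ (s + 1)).trace :=
        sum_diag_pow_le_card_pow_mul_sum_trace_pow (hφ_psd hX) (fun i => hφ_psd (hXs i))
          (by simpa [map_sub, map_sum] using hφ_psd hle) s
    _ = _ := by simp [hφ_trace]
end

section
/- Let Z = (Z_1,...,Z_n) be independent random variables and let Z' be obtained by choosing i uniformly from [n] and resampling Z_i independently. Then for α ∈ ℕⁿ with α ≠ 0, the centered monomial χ_α(Z) = ∏_{i: α_i>0}(Z_i^{α_i} − E[Z_i^{α_i}]) satisfies E[χ_α(Z) − χ_α(Z') | Z] = (|α|_0/n) · χ_α(Z), where |α|_0 is the number of nonzero entries of α. -/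
/-! Resampling coordinate `i` integrates out the factor of `χ_α` indexed by `i`: if `α i > 0`
that factor is centred, so the whole integral vanishes; if `α i = 0` then `χ_α` does not depend
on `z i` at all. Hence exactly `|α|₀` of the `n` summands contribute `χ_α(z)`. -/

open MeasureTheory

theorem integral_sub_integral_self {E : Type*} [MeasurableSpace E] {ν : Measure E}
    [IsProbabilityMeasure ν] {f : E → ℝ} (hf : Integrable f ν) :
    ∫ x, (f x - ∫ y, f y ∂ν) ∂ν = 0 := by
  rw [integral_sub hf (integrable_const _), integral_const, probReal_univ, one_smul, sub_self]

section ProductOfCoordinateFunctions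

variable {ι E : Type*} [DecidableEq ι] [MeasurableSpace E] {ν : Measure E}
  (f : ι → E → ℝ) (s : Finset ι) (z : ι → E) {i : ι}

theorem integral_prod_update_of_mem (hi : i ∈ s) (hf : ∫ x, f i x ∂ν = 0) :
    ∫ x, ∏ j ∈ s, f j (Function.update z i x j) ∂ν = 0 := by
  simp_rw [Function.apply_update f, Finset.prod_update_of_mem hi, integral_mul_const, hf,
    zero_mul]

theorem integral_prod_update_of_notMem [IsProbabilityMeasure ν] (hi : i ∉ s) :
    ∫ x, ∏ j ∈ s, f j (Function.update z i x j) ∂ν = ∏ j ∈ s, f j (z j) := by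
  simp_rw [Function.apply_update f, Finset.prod_update_of_notMem hi, integral_const,
    probReal_univ, one_smul]

variable [Fintype ι]

theorem sum_sub_integral_prod_update {μ : ι → Measure E} [∀ i, IsProbabilityMeasure (μ i)]
    (hf : ∀ i ∈ s, ∫ x, f i x ∂(μ i) = 0) :
    ∑ i, (∏ j ∈ s, f j (z j) - ∫ x, ∏ j ∈ s, f j (Function.update z i x j) ∂(μ i))
      = s.card * ∏ j ∈ s, f j (z j) := by
  have hterm : ∀ i, ∏ j ∈ s, f j (z j) - ∫ x, ∏ j ∈ s, f j (Function.update z i x j) ∂(μ i)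
      = if i ∈ s then ∏ j ∈ s, f j (z j) else 0 := by
    intro i
    by_cases hi : i ∈ s
    · rw [integral_prod_update_of_mem f s z hi (hf i hi), if_pos hi, sub_zero]
    · rw [integral_prod_update_of_notMem f s z hi, if_neg hi, sub_self]
  rw [Finset.sum_congr rfl fun i _ => hterm i, Finset.sum_ite_mem, Finset.univ_inter,
    Finset.sum_const, nsmul_eq_mul]

end ProductOfCoordinateFunctions

theorem centered_monomial_eigenvector_general
    {n : ℕ} (μ : Fin n → Measure ℝ)
    [∀ i, IsProbabilityMeasure (μ i)]
    (α : Fin n → ℕ)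
    (hint : ∀ i k, Integrable (fun x : ℝ => x ^ k) (μ i))
    (m : Fin n → ℝ) (hm : ∀ i, m i = ∫ x, x ^ α i ∂(μ i))
    (χ : (Fin n → ℝ) → ℝ)
    (hχ : ∀ z, χ z = ∏ i ∈ Finset.univ.filter (fun i => 0 < α i), (z i ^ α i - m i))
    (z : Fin n → ℝ) :
    (1 / n : ℝ) * ∑ i, (χ z - ∫ x, χ (Function.update z i x) ∂(μ i))
      = (((Finset.univ.filter (fun i => 0 < α i)).card : ℝ) / n) * χ z := by
  obtain rfl : χ = _ := funext hχ
  have hcentred : ∀ i, ∫ x, (x ^ α i - m i) ∂(μ i) = 0 := fun i => by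
    rw [hm i]; exact integral_sub_integral_self (hint i (α i))
  rw [sum_sub_integral_prod_update (fun j x => x ^ α j - m j) _ z fun i _ => hcentred i]
  ring

theorem centered_monomial_eigenvector
    {n : ℕ} (hn : 0 < n) (μ : Fin n → Measure ℝ)
    [∀ i, IsProbabilityMeasure (μ i)]
    (α : Fin n → ℕ) (hα : α ≠ 0)
    (hint : ∀ i k, Integrable (fun x : ℝ => x ^ k) (μ i))
    (m : Fin n → ℝ) (hm : ∀ i, m i = ∫ x, x ^ α i ∂(μ i))
    (χ : (Fin n → ℝ) → ℝ)
    (hχ : ∀ z, χ z = ∏ i ∈ Finset.univ.filter (fun i => 0 < α i), (z i ^ α i - m i))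
    (z : Fin n → ℝ) :
    (1 / n : ℝ) * ∑ i, (χ z - ∫ x, χ (Function.update z i x) ∂(μ i))
      = (((Finset.univ.filter (fun i => 0 < α i)).card : ℝ) / n) * χ z :=
  centered_monomial_eigenvector_general μ α hint m hm χ hχ z
end

section
/- For every mean-zero polynomial f of degree at most d in independent random variables Z_1,...,Z_n, there exists a polynomial K_f in 2n variables such that K_f(z',z) = −K_f(z,z') for all inputs, and E[K_f(Z,Z')|Z] = f(Z), where (Z,Z') is the exchangeable pair obtained by resampling one uniformly random coordinate. -/
open MeasureTheory MvPolynomial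

/-! The polynomials `∏_{j ∈ S} (X_j ^ β_j - E[Z_j ^ β_j])` are eigenfunctions of the Laplacian
with eigenvalue `|S| / n`: resampling a coordinate in `S` averages its factor to zero, resampling
one outside `S` changes nothing. Expanding `X^β = ∏_j ((X_j ^ β_j - E[Z_j ^ β_j]) + E[Z_j ^ β_j])`
writes every monomial as its mean plus such eigenfunctions with `S ≠ ∅`, so `f - E f = L g` for a
polynomial `g`, and `K(z, z') = g(z) - g(z')` is an antisymmetric kernel with
`E[K(Z, Z') | Z] = L g (Z)`. -/

theorem integrable_polynomial_eval {ν : Measure ℝ}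
    (hint : ∀ k, Integrable (fun x : ℝ => x ^ k) ν) (q : Polynomial ℝ) :
    Integrable (fun x => q.eval x) ν := by
  simp_rw [Polynomial.eval_eq_sum_range]
  exact integrable_finsetSum _ fun k _ => (hint k).const_mul _

theorem eval_update_eq_polynomial_eval {σ R : Type*} [DecidableEq σ] [CommRing R]
    (p : MvPolynomial σ R) (z : σ → R) (i : σ) (x : R) :
    eval (Function.update z i x) p
      = (aeval (Function.update (fun j => Polynomial.C (z j)) i Polynomial.X) p).eval x := by
  rw [aeval_def, ← Polynomial.coe_evalRingHom, eval₂_comp_left]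
  change eval₂ (RingHom.id R) _ p = _
  congr 1
  · ext; simp
  · ext j
    rcases eq_or_ne j i with rfl | hj <;> simp [*]

section

variable {n : ℕ} (μ : Fin n → Measure ℝ)

theorem integrable_eval_update (hint : ∀ i k, Integrable (fun x : ℝ => x ^ k) (μ i))
    (p : MvPolynomial (Fin n) ℝ) (z : Fin n → ℝ) (i : Fin n) :
    Integrable (fun x => eval (Function.update z i x) p) (μ i) := by
  simp_rw [eval_update_eq_polynomial_eval]
  exact integrable_polynomial_eval (hint i) _

noncomputable def polyMean : MvPolynomial (Fin n) ℝ →ₗ[ℝ] ℝ :=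
  (basisMonomials (Fin n) ℝ).constr ℝ fun β => ∏ i, ∫ x, x ^ β i ∂μ i

theorem polyMean_monomial (β : Fin n →₀ ℕ) (c : ℝ) :
    polyMean μ (monomial β c) = c * ∏ i, ∫ x, x ^ β i ∂μ i := by
  rw [show monomial β c = c • basisMonomials (Fin n) ℝ β by
      rw [coe_basisMonomials, smul_monomial, smul_eq_mul, mul_one],
    map_smul, polyMean, Module.Basis.constr_basis, smul_eq_mul]

theorem polyMean_eq_sum (f : MvPolynomial (Fin n) ℝ) :
    polyMean μ f = ∑ β ∈ f.support, f.coeff β * ∏ i, ∫ x, x ^ β i ∂μ i := by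
  conv_lhs => rw [f.as_sum]
  simp only [map_sum, polyMean_monomial]

/-- `L p (z) = E[p(Z) - p(Z') | Z = z]`, where `Z'` resamples a uniform coordinate `i`
from `μ i`. -/
noncomputable def laplacian [∀ i, IsFiniteMeasure (μ i)]
    (hint : ∀ i k, Integrable (fun x : ℝ => x ^ k) (μ i)) :
    MvPolynomial (Fin n) ℝ →ₗ[ℝ] (Fin n → ℝ) → ℝ where
  toFun p z := (1 / n : ℝ) * ∑ i, ∫ x, (eval z p - eval (Function.update z i x) p) ∂μ i
  map_add' p q := by
    ext z
    have hint_sub (r : MvPolynomial (Fin n) ℝ) (i : Fin n) :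
        Integrable (fun x => eval z r - eval (Function.update z i x) r) (μ i) :=
      (integrable_const _).sub (integrable_eval_update μ hint r z i)
    simp only [map_add, add_sub_add_comm, Pi.add_apply, ← mul_add, ← Finset.sum_add_distrib,
      integral_add (hint_sub p _) (hint_sub q _)]
  map_smul' c p := by
    ext z
    simp only [smul_eval, ← mul_sub, integral_const_mul, ← Finset.mul_sum, RingHom.id_apply,
      Pi.smul_apply, smul_eq_mul]
    ring

theorem laplacian_apply [∀ i, IsFiniteMeasure (μ i)]
    (hint : ∀ i k, Integrable (fun x : ℝ => x ^ k) (μ i)) (p : MvPolynomial (Fin n) ℝ)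
    (z : Fin n → ℝ) :
    laplacian μ hint p z
      = (1 / n : ℝ) * ∑ i, ∫ x, (eval z p - eval (Function.update z i x) p) ∂μ i :=
  rfl

noncomputable def centeredMonomial (S : Finset (Fin n)) (β : Fin n →₀ ℕ) :
    MvPolynomial (Fin n) ℝ :=
  ∏ j ∈ S, (X j ^ β j - C (∫ x, x ^ β j ∂μ j))

theorem eval_centeredMonomial (S : Finset (Fin n)) (β : Fin n →₀ ℕ) (z : Fin n → ℝ) :
    eval z (centeredMonomial μ S β) = ∏ j ∈ S, (z j ^ β j - ∫ x, x ^ β j ∂μ j) := by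
  simp [centeredMonomial]

theorem monomial_one_eq_sum_centeredMonomial (β : Fin n →₀ ℕ) :
    monomial β (1 : ℝ) = ∑ S ∈ Finset.univ.powerset,
      C (∏ j ∈ Finset.univ \ S, ∫ x, x ^ β j ∂μ j) * centeredMonomial μ S β := by
  classical
  have hcenter (j : Fin n) :
      X j ^ β j = (X j ^ β j - C (∫ x, x ^ β j ∂μ j)) + C (∫ x, x ^ β j ∂μ j) :=
    (sub_add_cancel _ _).symm
  rw [monomial_eq, C_1, one_mul, Finsupp.prod_fintype _ _ fun j => pow_zero _,
    Finset.prod_congr rfl fun j _ => hcenter j, Finset.prod_add]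
  simp_rw [centeredMonomial, map_prod, mul_comm]

section Probability

variable [∀ i, IsProbabilityMeasure (μ i)]

theorem integral_sub_eval_update_centeredMonomial
    (hint : ∀ i k, Integrable (fun x : ℝ => x ^ k) (μ i))
    (S : Finset (Fin n)) (β : Fin n →₀ ℕ) (z : Fin n → ℝ) (i : Fin n) :
    ∫ x, (eval z (centeredMonomial μ S β)
        - eval (Function.update z i x) (centeredMonomial μ S β)) ∂μ i
      = if i ∈ S then eval z (centeredMonomial μ S β) else 0 := by
  split_ifs with hi
  · set r := ∏ j ∈ S.erase i, (z j ^ β j - ∫ x, x ^ β j ∂μ j)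
    have hfactor (x : ℝ) : eval (Function.update z i x) (centeredMonomial μ S β)
        = (x ^ β i - ∫ x, x ^ β i ∂μ i) * r := by
      rw [eval_centeredMonomial, ← Finset.mul_prod_erase _ _ hi, Function.update_self]
      congr 1
      exact Finset.prod_congr rfl fun j hj => by
        rw [Function.update_of_ne (Finset.ne_of_mem_erase hj)]
    simp_rw [hfactor]
    have hint_factor : Integrable (fun x => (x ^ β i - ∫ x, x ^ β i ∂μ i) * r) (μ i) :=
      ((hint i _).sub (integrable_const _)).mul_const _
    rw [integral_sub (integrable_const _) hint_factor, integral_mul_const,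
      integral_sub (hint i _) (integrable_const _)]
    simp
  · have hfixed (x : ℝ) : eval (Function.update z i x) (centeredMonomial μ S β)
        = eval z (centeredMonomial μ S β) := by
      simp_rw [eval_centeredMonomial]
      exact Finset.prod_congr rfl fun j hj => by
        rw [Function.update_of_ne (ne_of_mem_of_not_mem hj hi)]
    simp [hfixed]

variable (hint : ∀ i k, Integrable (fun x : ℝ => x ^ k) (μ i))

theorem laplacian_centeredMonomial (S : Finset (Fin n)) (β : Fin n →₀ ℕ) :
    laplacian μ hint (centeredMonomial μ S β)
      = (S.card / n : ℝ) • fun z => eval z (centeredMonomial μ S β) := by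
  ext z
  simp only [laplacian_apply, integral_sub_eval_update_centeredMonomial μ hint,
    Finset.sum_ite_mem, Finset.univ_inter, Finset.sum_const, nsmul_eq_mul, Pi.smul_apply,
    smul_eq_mul]
  ring

theorem eval_centeredMonomial_mem_range {S : Finset (Fin n)} (hS : S.Nonempty)
    (β : Fin n →₀ ℕ) :
    (fun z => eval z (centeredMonomial μ S β)) ∈ LinearMap.range (laplacian μ hint) := by
  obtain ⟨i, -⟩ := id hS
  have hn : (n : ℝ) ≠ 0 := Nat.cast_ne_zero.2 i.pos.ne'
  have hcard : (S.card : ℝ) ≠ 0 := Nat.cast_ne_zero.2 hS.card_pos.ne'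
  refine ⟨((n : ℝ) / S.card) • centeredMonomial μ S β, ?_⟩
  rw [map_smul, laplacian_centeredMonomial, smul_smul, div_mul_div_cancel₀ hcard,
    div_self hn, one_smul]

theorem exists_laplacian_eq_sub_polyMean (f : MvPolynomial (Fin n) ℝ) :
    ∃ g, laplacian μ hint g = fun z => eval z f - polyMean μ f := by
  classical
  suffices (fun z => eval z f - polyMean μ f) ∈ LinearMap.range (laplacian μ hint) from this
  induction f using induction_on' with
  | monomial β c =>
    have hsmul : (fun z => eval z (monomial β c) - polyMean μ (monomial β c))
        = c • fun z => eval z (monomial β 1) - polyMean μ (monomial β 1) := by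
      ext z
      simp only [eval_monomial, polyMean_monomial, Pi.smul_apply, smul_eq_mul]
      ring
    have hexpand : (fun z => eval z (monomial β 1) - polyMean μ (monomial β 1))
        = ∑ S ∈ Finset.univ.powerset.erase ∅, (∏ j ∈ Finset.univ \ S, ∫ x, x ^ β j ∂μ j) •
            fun z => eval z (centeredMonomial μ S β) := by
      ext z
      rw [polyMean_monomial, monomial_one_eq_sum_centeredMonomial μ,
        ← Finset.add_sum_erase _ _ (Finset.empty_mem_powerset _)]
      simp [centeredMonomial]
    rw [hsmul, hexpand]
    refine Submodule.smul_mem _ _ (Submodule.sum_mem _ fun S hS => Submodule.smul_mem _ _ ?_)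
    exact eval_centeredMonomial_mem_range μ hint
      (Finset.nonempty_iff_ne_empty.2 (Finset.ne_of_mem_erase hS)) β
  | add p q hp hq =>
    have hadd : (fun z => eval z (p + q) - polyMean μ (p + q))
        = (fun z => eval z p - polyMean μ p) + fun z => eval z q - polyMean μ q := by
      ext z
      simp only [map_add, Pi.add_apply]
      ring
    rw [hadd]
    exact add_mem hp hq

end Probability

end

theorem explicit_kernel_exists_general
    {n : ℕ} (μ : Fin n → Measure ℝ)
    [∀ i, IsProbabilityMeasure (μ i)]
    (hint : ∀ i k, Integrable (fun x : ℝ => x ^ k) (μ i))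
    (E : MvPolynomial (Fin n) ℝ → ℝ)
    (hE : ∀ f, E f = ∑ β ∈ f.support, f.coeff β * ∏ i, ∫ x, x ^ β i ∂(μ i))
    (f : MvPolynomial (Fin n) ℝ) (hf0 : E f = 0) :
    ∃ K : MvPolynomial (Fin n ⊕ Fin n) ℝ,
      (∀ z z' : Fin n → ℝ,
        MvPolynomial.eval (Sum.elim z' z) K = - MvPolynomial.eval (Sum.elim z z') K)
      ∧ (∀ z : Fin n → ℝ,
        (1 / n : ℝ) * ∑ i, ∫ x,
            MvPolynomial.eval (Sum.elim z (Function.update z i x)) K ∂(μ i)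
          = MvPolynomial.eval z f) := by
  obtain ⟨g, hg⟩ := exists_laplacian_eq_sub_polyMean μ hint f
  rw [polyMean_eq_sum, ← hE, hf0] at hg
  simp only [sub_zero] at hg
  have eval_kernel (z z' : Fin n → ℝ) :
      eval (Sum.elim z z') (rename Sum.inl g - rename Sum.inr g) = eval z g - eval z' g := by
    simp [eval_rename]
  refine ⟨rename Sum.inl g - rename Sum.inr g, fun z z' => ?_, fun z => ?_⟩
  · rw [eval_kernel, eval_kernel, neg_sub]
  · simp only [eval_kernel]
    rw [← laplacian_apply μ hint, hg]

theorem explicit_kernel_exists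
    {n d : ℕ} (μ : Fin n → Measure ℝ)
    [∀ i, IsProbabilityMeasure (μ i)]
    (hint : ∀ i k, Integrable (fun x : ℝ => x ^ k) (μ i))
    (E : MvPolynomial (Fin n) ℝ → ℝ)
    (hE : ∀ f, E f = ∑ β ∈ f.support, f.coeff β * ∏ i, ∫ x, x ^ β i ∂(μ i))
    (f : MvPolynomial (Fin n) ℝ) (hdeg : f.totalDegree ≤ d) (hf0 : E f = 0) :
    ∃ K : MvPolynomial (Fin n ⊕ Fin n) ℝ,
      (∀ z z' : Fin n → ℝ,
        MvPolynomial.eval (Sum.elim z' z) K = - MvPolynomial.eval (Sum.elim z z') K)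
      ∧ (∀ z : Fin n → ℝ,
        (1 / n : ℝ) * ∑ i, ∫ x,
            MvPolynomial.eval (Sum.elim z (Function.update z i x)) K ∂(μ i)
          = MvPolynomial.eval z f) :=
  explicit_kernel_exists_general μ hint E hE f hf0
end

section
/- Let F: {−1,1}ⁿ → ℝ^{I×J} be a matrix-valued multilinear polynomial function, and for a,b ≥ 0 define F_{a,b} as the matrix indexed by (I×{0,1}ⁿ) × (J×{0,1}ⁿ) with entries F_{a,b}[(i,α),(j,β)] = ∇_{α+β}F[i,j] when |α| = a, |β| = b, α·β = 0, and 0 otherwise, where Z is uniform on {−1,1}ⁿ and Z^{(i)} resamples coordinate i. Then Σ_{i=1}^n E[(F_{a,b}(Z) − F_{a,b}(Z^{(i)}))(F_{a,b}(Z) − F_{a,b}(Z^{(i)}))ᵀ | Z] = 2(b+1)·F_{a,b+1}F_{a,b+1}ᵀ. -/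
/-!
Resampling coordinate `k` of a multilinear polynomial changes its derivative `∇_T F` by
`(z_k - s) ∇_{T ∪ {k}} F` when `k ∉ T`, and not at all when `k ∈ T`. Hence
`F_{a,b}(z) - F_{a,b}(z^{(k)}) = (z_k - Z'_k) C_k`, where `C_k` carries the column `(j, β ∪ {k})` of
`F_{a,b+1}` to the column `(j, β)`, for `k ∉ β`. Averaging over `Z'_k = ±1` gives the factor
`E[(z_k - Z'_k)²] = 2`, and in `∑_k C_k C_kᵀ` every column `(j, β)` of `F_{a,b+1}` occurs once
for each of the `b + 1` elements of `β`.
-/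

open Matrix Finset

variable {ι I J R : Type*} [DecidableEq ι]

theorem Finset.sum_sum_insert_eq_sum_card_nsmul [Fintype ι] [AddCommMonoid R]
    (f : Finset ι → R) :
    ∑ k, ∑ β, (if k ∉ β then f (insert k β) else 0) = ∑ β, β.card • f β := by
  have hfiber : ∀ k, ∑ β, (if k ∉ β then f (insert k β) else 0) = ∑ β with k ∈ β, f β := by
    intro k
    rw [← sum_filter]
    refine sum_nbij' (insert k) (erase · k) ?_ ?_ ?_ ?_ fun _ _ => rfl <;> intro β hβ <;>
      simp_all
  simp_rw [hfiber, sum_filter, sum_comm (γ := ι), ← sum_filter, filter_mem_eq_inter, univ_inter,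
    sum_const]

theorem prod_sdiff_sub_prod_sdiff_update [CommRing R] {S T : Finset ι} {k : ι} (hk : k ∉ T)
    (z : ι → R) (s : R) :
    ∏ l ∈ S \ T, z l - ∏ l ∈ S \ T, Function.update z k s l =
      if k ∈ S then (z k - s) * ∏ l ∈ S \ insert k T, z l else 0 := by
  by_cases hS : k ∈ S
  · have hST : k ∈ S \ T := mem_sdiff.mpr ⟨hS, hk⟩
    rw [prod_update_of_mem hST, ← mul_prod_erase _ _ hST, sdiff_singleton_eq_erase,
      sdiff_insert, if_pos hS]
    ring
  · rw [prod_update_of_notMem (fun h => hS (mem_sdiff.mp h).1), sub_self, if_neg hS]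

/-- `∇_T` of the multilinear polynomial `z ↦ ∑ S, c S * ∏ k ∈ S, z k`. -/
def multilinearDeriv [Fintype ι] [CommRing R] (c : Finset ι → R) (T : Finset ι) (z : ι → R) : R :=
  ∑ S ∈ univ.filter (T ⊆ ·), c S * ∏ k ∈ S \ T, z k

theorem multilinearDeriv_sub_update [Fintype ι] [CommRing R] (c : Finset ι → R) (T : Finset ι)
    (z : ι → R) (k : ι) (s : R) :
    multilinearDeriv c T z - multilinearDeriv c T (Function.update z k s) =
      if k ∈ T then 0 else (z k - s) * multilinearDeriv c (insert k T) z := by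
  unfold multilinearDeriv
  rw [← sum_sub_distrib]
  split_ifs with hk
  · refine sum_eq_zero fun S _ => ?_
    rw [prod_update_of_notMem (fun h => (mem_sdiff.mp h).2 hk), sub_self]
  · simp_rw [← mul_sub, prod_sdiff_sub_prod_sdiff_update hk, mul_ite, mul_zero,
      ← sum_filter, filter_filter, mul_sum, insert_subset_iff, and_comm]
    refine sum_congr rfl fun S _ => by ring

def colInsert [Zero R] (N : Matrix I (J × Finset ι) R) (k : ι) : Matrix I (J × Finset ι) R :=
  of fun p r => if k ∉ r.2 then N p (r.1, insert k r.2) else 0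

theorem sum_colInsert_mul_transpose [Fintype ι] [Fintype J] [CommSemiring R]
    {N : Matrix I (J × Finset ι) R} {m : ℕ} (hN : ∀ p j β, β.card ≠ m → N p (j, β) = 0) :
    ∑ k, colInsert N k * (colInsert N k)ᵀ = (m : R) • (N * Nᵀ) := by
  ext p q
  simp only [Matrix.sum_apply, mul_apply, transpose_apply, colInsert, of_apply,
    Fintype.sum_prod_type, ite_zero_mul_ite_zero, and_self, Matrix.smul_apply, smul_eq_mul,
    mul_sum]
  rw [sum_comm]
  refine sum_congr rfl fun j _ => ?_
  rw [sum_sum_insert_eq_sum_card_nsmul (fun β => N p (j, β) * N q (j, β))]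
  refine sum_congr rfl fun β _ => ?_
  by_cases hβ : β.card = m
  · rw [hβ, nsmul_eq_mul]
  · rw [hN p j β hβ, zero_mul, smul_zero, mul_zero]

/-- The paper's `F_{a,b}` when `D i j T = ∇_T F[i,j]`. -/
def derivMatrix [Zero R] (D : I → J → Finset ι → R) (a b : ℕ) :
    Matrix (I × Finset ι) (J × Finset ι) R :=
  of fun p q => if p.2.card = a ∧ q.2.card = b ∧ Disjoint p.2 q.2 then D p.1 q.1 (p.2 ∪ q.2) else 0

theorem derivMatrix_apply_of_card_ne [Zero R] (D : I → J → Finset ι → R) (a : ℕ) {b : ℕ}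
    (p : I × Finset ι) (j : J) {β : Finset ι} (hβ : β.card ≠ b) :
    derivMatrix D a b p (j, β) = 0 :=
  if_neg fun h => hβ h.2.1

theorem derivMatrix_sub_derivMatrix [CommRing R] {D D' : I → J → Finset ι → R} {x : R} {k : ι}
    (h : ∀ i j T, D i j T - D' i j T = if k ∈ T then 0 else x * D i j (insert k T)) (a b : ℕ) :
    derivMatrix D a b - derivMatrix D' a b = x • colInsert (derivMatrix D a (b + 1)) k := by
  ext ⟨i, α⟩ ⟨j, β⟩
  simp only [Matrix.sub_apply, Matrix.smul_apply, derivMatrix, colInsert, of_apply]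
  split_ifs <;> simp_all [card_insert_of_notMem]

theorem rademacher_variance_proxy_claim_general
    {n a b : ℕ} {I J : Type} [Fintype J]
    (c : I → J → Finset (Fin n) → ℝ)
    (Dv : I → J → Finset (Fin n) → (Fin n → ℝ) → ℝ)
    (hDv : ∀ i j T z, Dv i j T z =
      ∑ S ∈ Finset.univ.filter (fun S : Finset (Fin n) => T ⊆ S),
        c i j S * ∏ k ∈ S \ T, z k)
    (Fab : ℕ → ℕ → (Fin n → ℝ) → Matrix (I × Finset (Fin n)) (J × Finset (Fin n)) ℝ)
    (hFab : ∀ a' b' z p q, Fab a' b' z p q =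
      if p.2.card = a' ∧ q.2.card = b' ∧ Disjoint p.2 q.2
      then Dv p.1 q.1 (p.2 ∪ q.2) z else 0)
    (z : Fin n → ℝ) (hz : ∀ k, z k = 1 ∨ z k = -1) :
    ∑ i : Fin n, ((1 : ℝ)/2) •
      ((Fab a b z - Fab a b (Function.update z i 1)) *
          (Fab a b z - Fab a b (Function.update z i 1))ᵀ
        + (Fab a b z - Fab a b (Function.update z i (-1))) *
          (Fab a b z - Fab a b (Function.update z i (-1)))ᵀ)
      = (2 * ((b : ℝ) + 1)) • (Fab a (b + 1) z * (Fab a (b + 1) z)ᵀ) := by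
  have hFab_eq : ∀ a' b' w,
      Fab a' b' w = derivMatrix (fun i j T => multilinearDeriv (c i j) T w) a' b' := by
    intro a' b' w
    ext p q
    rw [hFab, hDv]
    rfl
  have hdiff : ∀ k s, Fab a b z - Fab a b (Function.update z k s) =
      (z k - s) • colInsert (Fab a (b + 1) z) k := by
    intro k s
    simp only [hFab_eq]
    exact derivMatrix_sub_derivMatrix (fun i j T => multilinearDeriv_sub_update _ _ _ _ _) a b
  have hcoef : ∀ k, (1 / 2 : ℝ) * ((z k - 1) * (z k - 1) + (z k - -1) * (z k - -1)) = 2 := by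
    intro k
    rcases hz k with h | h <;> rw [h] <;> norm_num
  have hsupp : ∀ p j β, β.card ≠ b + 1 → Fab a (b + 1) z p (j, β) = 0 := by
    intro p j β hβ
    rw [hFab_eq]
    exact derivMatrix_apply_of_card_ne _ _ _ _ hβ
  simp_rw [hdiff, transpose_smul, Matrix.smul_mul, Matrix.mul_smul, smul_smul, ← add_smul,
    smul_smul, hcoef, ← smul_sum, sum_colInsert_mul_transpose hsupp, smul_smul, Nat.cast_succ]

theorem rademacher_variance_proxy_claim
    {n a b : ℕ} {I J : Type} [Fintype I] [Fintype J]
    (c : I → J → Finset (Fin n) → ℝ)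
    (Dv : I → J → Finset (Fin n) → (Fin n → ℝ) → ℝ)
    (hDv : ∀ i j T z, Dv i j T z =
      ∑ S ∈ Finset.univ.filter (fun S : Finset (Fin n) => T ⊆ S),
        c i j S * ∏ k ∈ S \ T, z k)
    (Fab : ℕ → ℕ → (Fin n → ℝ) → Matrix (I × Finset (Fin n)) (J × Finset (Fin n)) ℝ)
    (hFab : ∀ a' b' z p q, Fab a' b' z p q =
      if p.2.card = a' ∧ q.2.card = b' ∧ Disjoint p.2 q.2
      then Dv p.1 q.1 (p.2 ∪ q.2) z else 0)
    (z : Fin n → ℝ) (hz : ∀ k, z k = 1 ∨ z k = -1) :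
    ∑ i : Fin n, ((1 : ℝ)/2) •
      ((Fab a b z - Fab a b (Function.update z i 1)) *
          (Fab a b z - Fab a b (Function.update z i 1))ᵀ
        + (Fab a b z - Fab a b (Function.update z i (-1))) *
          (Fab a b z - Fab a b (Function.update z i (-1)))ᵀ)
      = (2 * ((b : ℝ) + 1)) • (Fab a (b + 1) z * (Fab a (b + 1) z)ᵀ) :=
  rademacher_variance_proxy_claim_general c Dv hDv Fab hFab z hz
end

section
/- Let f be a convex continuous function on an interval I containing 0 with f(0) ≤ 0. For real symmetric m×m matrices B_1,...,B_n with spectra in I and m×m matrices A_1,...,A_n with Σ A_iᵀA_i ⪯ Id, we have tr f(Σᵢ A_iᵀ B_i A_i) ≤ tr(Σᵢ A_iᵀ f(B_i) A_i). -/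
open Matrix

/-!
Let `u_k` be an orthonormal eigenbasis of `S = ∑ i, (A i)ᵀ * B i * A i`, so that
`tr f(S) = ∑ k, f ⟪u_k, S u_k⟫`. Expanding each `B i` in its own orthonormal eigenbasis `v_ij`
(eigenvalues `μ_ij`) gives `⟪u_k, S u_k⟫ = ∑ i j, w_ijk μ_ij` with `w_ijk = ⟪v_ij, A i u_k⟫² ≥ 0`
and `∑ i j, w_ijk = ⟪u_k, (∑ i, (A i)ᵀ * A i) u_k⟫ ≤ 1`. Jensen's inequality for these
subprobability weights (the missing mass sits at `0`, where `f ≤ 0`) bounds `f ⟪u_k, S u_k⟫` by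
`∑ i j, w_ijk f(μ_ij) = ∑ i, ⟪A i u_k, f(B i) A i u_k⟫`, and summing over `k` gives the
right-hand trace.
-/

section Jensen

variable {𝕜 E β ι : Type*} [Field 𝕜] [LinearOrder 𝕜] [IsStrictOrderedRing 𝕜] [AddCommGroup E]
  [AddCommGroup β] [PartialOrder β] [IsOrderedAddMonoid β] [Module 𝕜 E] [Module 𝕜 β]
  [IsStrictOrderedModule 𝕜 β] {s : Set E} {f : E → β} {t : Finset ι} {w : ι → 𝕜} {p : ι → E}

theorem ConvexOn.map_sum_le_of_sum_le_one (hf : ConvexOn 𝕜 s f) (hs : 0 ∈ s) (hf0 : f 0 ≤ 0)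
    (h₀ : ∀ i ∈ t, 0 ≤ w i) (h₁ : ∑ i ∈ t, w i ≤ 1) (hmem : ∀ i ∈ t, p i ∈ s) :
    f (∑ i ∈ t, w i • p i) ≤ ∑ i ∈ t, w i • f (p i) := by
  have hv : 0 ≤ 1 - ∑ i ∈ t, w i := sub_nonneg.2 h₁
  have := hf.map_add_sum_le h₀ (sub_add_cancel 1 _) hmem hv hs
  rw [smul_zero, zero_add] at this
  exact this.trans (add_le_of_nonpos_left (smul_nonpos_of_nonneg_of_nonpos hv hf0))

end Jensen

namespace Matrix

theorem dotProduct_mul_diagonal_mul_transpose_mulVec {R κ : Type*} [CommSemiring R]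
    [Fintype κ] [DecidableEq κ] (V : Matrix κ κ R) (d : κ → R) (x : κ → R) :
    x ⬝ᵥ (V * diagonal d * Vᵀ) *ᵥ x = ∑ j, d j * (x ᵥ* V) j ^ 2 := by
  rw [← mulVec_mulVec, ← mulVec_mulVec, dotProduct_mulVec, mulVec_transpose, dotProduct]
  simp only [mulVec_diagonal]
  exact Finset.sum_congr rfl fun j _ => by ring

theorem dotProduct_transpose_mul_mul_mulVec {R κ ν : Type*} [CommSemiring R] [Fintype κ]
    [Fintype ν] (A : Matrix ν κ R) (C : Matrix ν ν R) (x : κ → R) :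
    x ⬝ᵥ (Aᵀ * C * A) *ᵥ x = (A *ᵥ x) ⬝ᵥ C *ᵥ (A *ᵥ x) := by
  rw [← mulVec_mulVec, ← mulVec_mulVec, dotProduct_mulVec, vecMul_transpose]

theorem sum_dotProduct_mulVec_le_of_posSemidef {ι κ ν : Type*} [Fintype ι] [Fintype κ]
    [DecidableEq κ] [Fintype ν] {A : ι → Matrix ν κ ℝ}
    (hA : ((1 : Matrix κ κ ℝ) - ∑ i, (A i)ᵀ * A i).PosSemidef) (x : κ → ℝ) :
    ∑ i, (A i *ᵥ x) ⬝ᵥ (A i *ᵥ x) ≤ x ⬝ᵥ x := by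
  have := hA.dotProduct_mulVec_nonneg x
  simp only [star_trivial, sub_mulVec, one_mulVec, dotProduct_sub, sum_mulVec, dotProduct_sum,
    ← mulVec_mulVec, dotProduct_mulVec x (A _)ᵀ, vecMul_transpose] at this
  linarith

theorem trace_eq_sum_star_dotProduct_mulVec {𝕜 κ : Type*} [RCLike 𝕜] [Fintype κ]
    [DecidableEq κ] (M : Matrix κ κ 𝕜) (b : OrthonormalBasis κ 𝕜 (EuclideanSpace 𝕜 κ)) :
    M.trace = ∑ k, star ⇑(b k) ⬝ᵥ M *ᵥ ⇑(b k) := by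
  rw [← M.trace_toLin_eq (EuclideanSpace.basisFun κ 𝕜).toBasis,
    ← toEuclideanLin_eq_toLin_orthonormal, LinearMap.trace_eq_sum_inner _ b]
  simp only [EuclideanSpace.inner_eq_star_dotProduct, ofLp_toLpLin, toLin'_apply]
  exact Fintype.sum_congr _ _ fun _ => dotProduct_comm _ _

theorem IsHermitian.trace_cfc {𝕜 κ : Type*} [RCLike 𝕜] [Fintype κ] [DecidableEq κ]
    {A : Matrix κ κ 𝕜} (hA : A.IsHermitian) (f : ℝ → ℝ) :
    (hA.cfc f).trace = ∑ i, (f (hA.eigenvalues i) : 𝕜) := by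
  rw [IsHermitian.cfc, Unitary.conjStarAlgAut_apply, trace_mul_cycle, Unitary.coe_star_mul_self,
    one_mul, trace_diagonal]
  rfl

namespace IsHermitian

variable {κ : Type*} [Fintype κ] [DecidableEq κ] {B : Matrix κ κ ℝ} (hB : B.IsHermitian)
include hB

theorem eigenvalues_eq_dotProduct (k : κ) :
    hB.eigenvalues k = ⇑(hB.eigenvectorBasis k) ⬝ᵥ B *ᵥ ⇑(hB.eigenvectorBasis k) := by
  simp [hB.eigenvalues_eq k]

theorem dotProduct_cfc_mulVec (f : ℝ → ℝ) (x : κ → ℝ) :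
    x ⬝ᵥ hB.cfc f *ᵥ x = ∑ j, f (hB.eigenvalues j) * (x ⬝ᵥ ⇑(hB.eigenvectorBasis j)) ^ 2 := by
  rw [IsHermitian.cfc, Unitary.conjStarAlgAut_apply, star_eq_conjTranspose,
    conjTranspose_eq_transpose_of_trivial, dotProduct_mul_diagonal_mul_transpose_mulVec]
  rfl

theorem dotProduct_mulVec_eq_sum_eigenvalues_mul (x : κ → ℝ) :
    x ⬝ᵥ B *ᵥ x = ∑ j, hB.eigenvalues j * (x ⬝ᵥ ⇑(hB.eigenvectorBasis j)) ^ 2 := by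
  simpa [← hB.cfc_eq, cfc_id ℝ B hB.isSelfAdjoint] using hB.dotProduct_cfc_mulVec id x

theorem sum_sq_dotProduct_eigenvectorBasis (x : κ → ℝ) :
    ∑ j, (x ⬝ᵥ ⇑(hB.eigenvectorBasis j)) ^ 2 = x ⬝ᵥ x := by
  have := hB.dotProduct_cfc_mulVec 1 x
  rw [← hB.cfc_eq, cfc_one ℝ B hB.isSelfAdjoint, one_mulVec] at this
  simpa using this.symm

end IsHermitian

end Matrix

theorem ConvexOn.map_sum_dotProduct_mulVec_le {ι κ : Type*} [Fintype ι] [Fintype κ]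
    [DecidableEq κ] {I : Set ℝ} {f : ℝ → ℝ} (hf : ConvexOn ℝ I f) (h0 : 0 ∈ I) (hf0 : f 0 ≤ 0)
    {B : ι → Matrix κ κ ℝ} (hB : ∀ i, (B i).IsHermitian) (hspec : ∀ i, spectrum ℝ (B i) ⊆ I)
    (x : ι → κ → ℝ) (hx : ∑ i, x i ⬝ᵥ x i ≤ 1) :
    f (∑ i, x i ⬝ᵥ B i *ᵥ x i) ≤ ∑ i, x i ⬝ᵥ (hB i).cfc f *ᵥ x i := by
  let w (p : ι × κ) : ℝ := (x p.1 ⬝ᵥ ⇑((hB p.1).eigenvectorBasis p.2)) ^ 2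
  let μ (p : ι × κ) : ℝ := (hB p.1).eigenvalues p.2
  have hcfc : ∑ i, x i ⬝ᵥ (hB i).cfc f *ᵥ x i = ∑ p, w p • f (μ p) := by
    simp only [(hB _).dotProduct_cfc_mulVec, Fintype.sum_prod_type, w, μ, smul_eq_mul, mul_comm]
  have hself : ∑ i, x i ⬝ᵥ B i *ᵥ x i = ∑ p, w p • μ p := by
    simp only [(hB _).dotProduct_mulVec_eq_sum_eigenvalues_mul, Fintype.sum_prod_type, w, μ,
      smul_eq_mul, mul_comm]
  have hw : ∑ p, w p ≤ 1 := by
    simpa only [Fintype.sum_prod_type, w, (hB _).sum_sq_dotProduct_eigenvectorBasis] using hx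
  rw [hcfc, hself]
  exact hf.map_sum_le_of_sum_le_one h0 hf0 (fun p _ => sq_nonneg _) hw
    fun p _ => hspec p.1 ((hB p.1).eigenvalues_mem_spectrum_real p.2)

theorem jensen_operator_trace_general
    {m n : ℕ} (I : Set ℝ) (h0 : (0 : ℝ) ∈ I)
    (f : ℝ → ℝ) (hconv : ConvexOn ℝ I f)
    (hf0 : f 0 ≤ 0)
    (B : Fin n → Matrix (Fin m) (Fin m) ℝ) (hB : ∀ i, (B i).IsHermitian)
    (hspec : ∀ i, spectrum ℝ (B i) ⊆ I)
    (A : Fin n → Matrix (Fin m) (Fin m) ℝ)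
    (hA : ((1 : Matrix (Fin m) (Fin m) ℝ) - ∑ i, (A i)ᵀ * A i).PosSemidef)
    (hsum : (∑ i, (A i)ᵀ * B i * A i).IsHermitian) :
    (hsum.cfc f).trace ≤ (∑ i, (A i)ᵀ * (hB i).cfc f * A i).trace := by
  set u := hsum.eigenvectorBasis
  have hweight : ∀ k, ∑ i, (A i *ᵥ ⇑(u k)) ⬝ᵥ (A i *ᵥ ⇑(u k)) ≤ 1 := fun k => by
    have hunit : ⇑(u k) ⬝ᵥ ⇑(u k) = 1 := by
      rw [← u.inner_eq_one k, EuclideanSpace.inner_eq_star_dotProduct, star_trivial]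
    exact hunit ▸ sum_dotProduct_mulVec_le_of_posSemidef hA (u k)
  calc (hsum.cfc f).trace = ∑ k, f (∑ i, (A i *ᵥ ⇑(u k)) ⬝ᵥ B i *ᵥ (A i *ᵥ ⇑(u k))) := by
        simp [hsum.trace_cfc, hsum.eigenvalues_eq_dotProduct, sum_mulVec, dotProduct_sum,
          dotProduct_transpose_mul_mul_mulVec, u]
    _ ≤ ∑ k, ∑ i, (A i *ᵥ ⇑(u k)) ⬝ᵥ (hB i).cfc f *ᵥ (A i *ᵥ ⇑(u k)) :=
        Finset.sum_le_sum fun k _ =>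
          hconv.map_sum_dotProduct_mulVec_le h0 hf0 hB hspec _ (hweight k)
    _ = (∑ i, (A i)ᵀ * (hB i).cfc f * A i).trace := by
        simp [trace_eq_sum_star_dotProduct_mulVec _ u, sum_mulVec, dotProduct_sum,
          dotProduct_transpose_mul_mul_mulVec]

theorem jensen_operator_trace
    {m n : ℕ} (I : Set ℝ) (hI : Convex ℝ I) (h0 : (0 : ℝ) ∈ I)
    (f : ℝ → ℝ) (hconv : ConvexOn ℝ I f) (hcont : ContinuousOn f I)
    (hf0 : f 0 ≤ 0)
    (B : Fin n → Matrix (Fin m) (Fin m) ℝ) (hB : ∀ i, (B i).IsHermitian)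
    (hspec : ∀ i, spectrum ℝ (B i) ⊆ I)
    (A : Fin n → Matrix (Fin m) (Fin m) ℝ)
    (hA : ((1 : Matrix (Fin m) (Fin m) ℝ) - ∑ i, (A i)ᵀ * A i).PosSemidef)
    (hsum : (∑ i, (A i)ᵀ * B i * A i).IsHermitian) :
    (hsum.cfc f).trace ≤ (∑ i, (A i)ᵀ * (hB i).cfc f * A i).trace :=
  jensen_operator_trace_general I h0 f hconv hf0 B hB hspec A hA hsum
end

section
/- Let τ be a shape with no edges, i.e. a graph with vertex set V(τ), empty edge set, and ordered subsets U_τ, V_τ of vertices, and let I_τ be the set of vertices of V(τ)\(U_τ ∪ V_τ) (all of degree 0). Then for any integer t ≥ 1, the graph matrix M_τ (which is deterministic) satisfies ‖M_τ‖_{2t}^{2t} ≤ n^{|U_τ ∩ V_τ|} · n^{t(|V(τ)| − |U_τ ∩ V_τ| + |I_τ|)}. -/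
/-!
Put `A = M * Mᵀ`. It is positive semidefinite with nonnegative entries, and its row sums are at
most `r * c`, where `r` and `c` bound the row and column sums of `M`. By Gershgorin every
eigenvalue of `A` lies in `[0, r * c]`, so `tr A^t ≤ (r * c)^(t-1) tr A`, while
`tr A = ∑ M_IJ² ≤ (max M_IJ) · ∑ M_IJ`.

Since `τ` has no edges, `M_IJ` counts the injections `V(τ) → [n]` extending the labellings `I`
of `U_τ` and `J` of `V_τ`. Such an injection is determined by its values off the labelled
vertices, which gives `M_IJ ≤ n^|I_τ|`, `r = n^(|V(τ)| - |U_τ|)`, `c = n^(|V(τ)| - |V_τ|)` and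
`∑ M_IJ ≤ n^|V(τ)|`; the exponents combine because
`(|V(τ)| - |U_τ|) + (|V(τ)| - |V_τ|) = |V(τ)| - |U_τ ∩ V_τ| + |I_τ|`.
-/

open Matrix

open Finset

namespace Matrix

variable {ι κ : Type*} [Fintype ι] [Fintype κ]

theorem IsHermitian.trace_pow_eq_sum_eigenvalues {𝕜 : Type*} [RCLike 𝕜] [DecidableEq ι]
    {A : Matrix ι ι 𝕜} (hA : A.IsHermitian) (t : ℕ) :
    (A ^ t).trace = ∑ i, (hA.eigenvalues i : 𝕜) ^ t := by
  conv_lhs => rw [hA.spectral_theorem, ← map_pow, Unitary.conjStarAlgAut_apply, trace_mul_cycle,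
    Unitary.coe_star_mul_self, Matrix.one_mul, diagonal_pow, trace_diagonal]
  rfl

theorem eigenvalue_le_of_sum_row_le [DecidableEq ι] {A : Matrix ι ι ℝ} (hA : ∀ i j, 0 ≤ A i j)
    {R : ℝ} (hR : ∀ i, ∑ j, A i j ≤ R) {μ : ℝ}
    (hμ : Module.End.HasEigenvalue (toLin' A) μ) : μ ≤ R := by
  obtain ⟨k, hk⟩ := eigenvalue_mem_ball hμ
  rw [Metric.mem_closedBall, Real.dist_eq] at hk
  have hnorm : ∑ j ∈ univ.erase k, ‖A k j‖ = ∑ j ∈ univ.erase k, A k j :=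
    sum_congr rfl fun j _ => Real.norm_of_nonneg (hA k j)
  linarith [(abs_le.mp hk).2, hR k, add_sum_erase univ (A k) (mem_univ k)]

theorem PosSemidef.trace_pow_succ_le [DecidableEq ι] {A : Matrix ι ι ℝ} (hA : A.PosSemidef)
    (h0 : ∀ i j, 0 ≤ A i j) {R : ℝ} (hR : ∀ i, ∑ j, A i j ≤ R) (t : ℕ) :
    (A ^ (t + 1)).trace ≤ R ^ t * A.trace := by
  have hle : ∀ i, hA.1.eigenvalues i ≤ R := fun i =>
    eigenvalue_le_of_sum_row_le h0 hR <| Module.End.hasEigenvalue_iff_mem_spectrum.mpr <|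
      (spectrum_toLin' A).symm ▸ hA.1.eigenvalues_mem_spectrum_real i
  rw [hA.1.trace_pow_eq_sum_eigenvalues, hA.1.trace_eq_sum_eigenvalues, mul_sum]
  gcongr with i
  have hnn := hA.eigenvalues_nonneg i
  simp only [RCLike.ofReal_real_eq_id, id, pow_succ]
  exact mul_le_mul_of_nonneg_right (pow_le_pow_left₀ hnn (hle i) t) hnn

variable {M : Matrix ι κ ℝ}

theorem sum_row_mul_transpose_le (h0 : ∀ i j, 0 ≤ M i j) {r c : ℝ} (hr : ∀ i, ∑ j, M i j ≤ r)
    (hc : ∀ j, ∑ i, M i j ≤ c) (hc0 : 0 ≤ c) (i : ι) : ∑ i', (M * Mᵀ) i i' ≤ r * c :=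
  calc ∑ i', (M * Mᵀ) i i' = ∑ j, M i j * ∑ i', M i' j := by
        simp only [mul_apply, transpose_apply, mul_sum]
        exact sum_comm
    _ ≤ (∑ j, M i j) * c := by
        rw [sum_mul]
        gcongr with j
        exacts [h0 i j, hc j]
    _ ≤ r * c := by gcongr; exact hr i

theorem trace_mul_transpose_le (h0 : ∀ i j, 0 ≤ M i j) {m T : ℝ} (hm : ∀ i j, M i j ≤ m)
    (hm0 : 0 ≤ m) (hT : ∑ i, ∑ j, M i j ≤ T) : (M * Mᵀ).trace ≤ m * T :=
  calc (M * Mᵀ).trace = ∑ i, ∑ j, M i j * M i j := by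
        simp only [trace, diag, mul_apply, transpose_apply]
    _ ≤ m * ∑ i, ∑ j, M i j := by
        simp only [mul_sum]
        gcongr with i _ j
        exacts [h0 i j, hm i j]
    _ ≤ m * T := by gcongr

theorem trace_pow_succ_mul_transpose_le [DecidableEq ι] (h0 : ∀ i j, 0 ≤ M i j) {m r c T : ℝ}
    (hm : ∀ i j, M i j ≤ m) (hm0 : 0 ≤ m) (hr : ∀ i, ∑ j, M i j ≤ r) (hr0 : 0 ≤ r)
    (hc : ∀ j, ∑ i, M i j ≤ c) (hc0 : 0 ≤ c) (hT : ∑ i, ∑ j, M i j ≤ T) (t : ℕ) :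
    ((M * Mᵀ) ^ (t + 1)).trace ≤ (r * c) ^ t * (m * T) := by
  have hA0 : ∀ i i', 0 ≤ (M * Mᵀ) i i' := fun i i' =>
    sum_nonneg fun j _ => mul_nonneg (h0 i j) (h0 i' j)
  have hA : (M * Mᵀ).PosSemidef := by simpa using posSemidef_self_mul_conjTranspose M
  refine (hA.trace_pow_succ_le hA0 (sum_row_mul_transpose_le h0 hr hc hc0) t).trans ?_
  gcongr
  exact trace_mul_transpose_le h0 hm hm0 hT

end Matrix

theorem Finset.card_compl_add_card_compl {α : Type*} [Fintype α] [DecidableEq α]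
    (s t : Finset α) : #sᶜ + #tᶜ = #(s ∩ t)ᶜ + #(s ∪ t)ᶜ := by
  rw [compl_inter, compl_union, card_union_add_card_inter]

section Extensions

variable {α β ι κ : Type*} [Fintype α] [Fintype β] [Fintype ι] [Fintype κ]

noncomputable def embeddingsExtending [DecidableEq β] (U : ι → α) (I : ι → β) :
    Finset (α ↪ β) :=
  {φ | ∀ x, φ (U x) = I x}

theorem card_le_of_forall_eqOn [DecidableEq α] (S : Finset (α ↪ β)) (s : Finset α)
    (h : ∀ φ ∈ S, ∀ ψ ∈ S, ∀ v ∈ s, φ v = ψ v) : #S ≤ Fintype.card β ^ #sᶜ := by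
  calc #S ≤ #(univ : Finset ({v // v ∈ sᶜ} → β)) := by
        refine card_le_card_of_injOn (fun φ v => φ v) (fun _ _ => mem_univ _) ?_
        intro φ hφ ψ hψ hφψ
        ext v
        by_cases hv : v ∈ s
        · exact h φ hφ ψ hψ v hv
        · exact congrFun hφψ ⟨v, mem_compl.mpr hv⟩
    _ = Fintype.card β ^ #sᶜ := by rw [card_univ, Fintype.card_fun, Fintype.card_coe]

theorem eq_of_mem_embeddingsExtending [DecidableEq β] {U : ι ↪ α} {I : ι → β} {φ ψ : α ↪ β}
    (hφ : φ ∈ embeddingsExtending U I) (hψ : ψ ∈ embeddingsExtending U I) :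
    ∀ v ∈ univ.map U, φ v = ψ v := by
  simp only [embeddingsExtending, mem_filter, mem_univ, true_and] at hφ hψ
  simp [hφ, hψ]

theorem card_embeddingsExtending_le [DecidableEq α] [DecidableEq β] (U : ι ↪ α) (I : ι → β) :
    #(embeddingsExtending U I) ≤ Fintype.card β ^ #(univ.map U)ᶜ :=
  card_le_of_forall_eqOn _ _ fun _ hφ _ hψ => eq_of_mem_embeddingsExtending hφ hψ

theorem card_embeddingsExtending_inter_le [DecidableEq α] [DecidableEq β] (U : ι ↪ α)
    (W : κ ↪ α) (I : ι → β) (J : κ → β) :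
    #(embeddingsExtending U I ∩ embeddingsExtending W J) ≤
      Fintype.card β ^ #(univ.map U ∪ univ.map W)ᶜ := by
  refine card_le_of_forall_eqOn _ _ fun φ hφ ψ hψ v hv => ?_
  rw [mem_inter] at hφ hψ
  rcases mem_union.mp hv with hv | hv
  exacts [eq_of_mem_embeddingsExtending hφ.1 hψ.1 v hv,
    eq_of_mem_embeddingsExtending hφ.2 hψ.2 v hv]

theorem sum_card_inter_embeddingsExtending [DecidableEq β] [DecidableEq κ]
    (S : Finset (α ↪ β)) (W : κ → α) :
    ∑ J : κ → β, #(S ∩ embeddingsExtending W J) = #S := by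
  rw [card_eq_sum_card_fiberwise (f := fun φ x => φ (W x)) (t := univ) fun _ _ => mem_univ _]
  refine sum_congr rfl fun J _ => congrArg card ?_
  ext φ
  simp [embeddingsExtending, funext_iff]

theorem sum_sum_card_embeddingsExtending_inter_le [DecidableEq α] [DecidableEq β]
    [DecidableEq ι] [DecidableEq κ] (U : ι → α) (W : κ → α) :
    ∑ I : ι → β, ∑ J : κ → β, #(embeddingsExtending U I ∩ embeddingsExtending W J) ≤
      Fintype.card β ^ Fintype.card α :=
  calc ∑ I : ι → β, ∑ J : κ → β, #(embeddingsExtending U I ∩ embeddingsExtending W J)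
      = ∑ I : ι → β, #(univ ∩ embeddingsExtending U I) := by
        simp only [sum_card_inter_embeddingsExtending, univ_inter]
    _ = #(univ : Finset (α ↪ β)) := sum_card_inter_embeddingsExtending _ _
    _ ≤ Fintype.card β ^ Fintype.card α := by
        rw [card_univ, Fintype.card_embedding_eq]
        exact Nat.descFactorial_le_pow _ _

end Extensions

theorem empty_shape_norm_bound
    {Vt : Type} [Fintype Vt] [DecidableEq Vt] {n a b t : ℕ} (ht : 1 ≤ t)
    (U : Fin a ↪ Vt) (W : Fin b ↪ Vt)
    (M : Matrix (Fin a → Fin n) (Fin b → Fin n) ℝ)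
    (hM : ∀ Iv Jv, M Iv Jv =
      Nat.card {φ : Vt ↪ Fin n // (∀ x, φ (U x) = Iv x) ∧ (∀ x, φ (W x) = Jv x)}) :
    ((M * Mᵀ) ^ t).trace ≤
      (n : ℝ) ^ ((Finset.univ.map U ∩ Finset.univ.map W).card) *
        (n : ℝ) ^ (t * (Fintype.card Vt
            - (Finset.univ.map U ∩ Finset.univ.map W).card
            + (Finset.univ \ (Finset.univ.map U ∪ Finset.univ.map W)).card)) := by
  obtain ⟨t, rfl⟩ := Nat.exists_eq_add_of_le' ht
  have hentry : ∀ I J, M I J = #(embeddingsExtending U I ∩ embeddingsExtending W J) := by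
    intro I J
    rw [hM, embeddingsExtending, embeddingsExtending, ← filter_and, ← Fintype.card_subtype,
      Nat.card_eq_fintype_card]
  have hrow : ∀ I, ∑ J, M I J ≤ (n : ℝ) ^ #(univ.map U)ᶜ := fun I => by
    simp only [hentry, ← Nat.cast_sum, sum_card_inter_embeddingsExtending]
    exact (Nat.cast_le.mpr (card_embeddingsExtending_le U I)).trans_eq (by simp)
  have hcol : ∀ J, ∑ I, M I J ≤ (n : ℝ) ^ #(univ.map W)ᶜ := fun J => by
    simp only [hentry, inter_comm (embeddingsExtending U _), ← Nat.cast_sum,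
      sum_card_inter_embeddingsExtending]
    exact (Nat.cast_le.mpr (card_embeddingsExtending_le W J)).trans_eq (by simp)
  have hmax : ∀ I J, M I J ≤ (n : ℝ) ^ #(univ.map U ∪ univ.map W)ᶜ := fun I J => by
    rw [hentry]
    exact (Nat.cast_le.mpr (card_embeddingsExtending_inter_le U W I J)).trans_eq (by simp)
  have htotal : ∑ I, ∑ J, M I J ≤ (n : ℝ) ^ Fintype.card Vt := by
    simp only [hentry, ← Nat.cast_sum]
    exact (Nat.cast_le.mpr (sum_sum_card_embeddingsExtending_inter_le U W)).trans_eq (by simp)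
  refine (trace_pow_succ_mul_transpose_le (fun I J => hentry I J ▸ Nat.cast_nonneg _) hmax
    (by positivity) hrow (by positivity) hcol (by positivity) htotal t).trans_eq ?_
  have hexp : #(univ.map U)ᶜ + #(univ.map W)ᶜ = Fintype.card Vt
      - #(univ.map U ∩ univ.map W) + #(univ \ (univ.map U ∪ univ.map W)) := by
    rw [card_compl_add_card_compl, card_compl, compl_eq_univ_sdiff]
  obtain ⟨d, hd⟩ := Nat.exists_eq_add_of_le (card_le_univ (univ.map U ∩ univ.map W))
  rw [← pow_add, hexp, compl_eq_univ_sdiff, hd, Nat.add_sub_cancel_left]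
  ring
end

section
/- Let τ be a shape, and for an ordered partition P = (E_1, E_2) of E(τ), let τ_P be the shape with V(τ_P) = V(τ), E(τ_P) = ∅, U_{τ_P} = U_τ ∪ V(E_1), V_{τ_P} = V_τ ∪ V(E_2), where V(E_i) denotes the endpoints of edges in E_i. Then S = U_{τ_P} ∩ V_{τ_P} is a vertex separator of τ: removing S from τ disconnects U_τ from V_τ. In particular |S| is at least the minimum vertex-separator size of τ. -/
theorem partition_separator
    {Vt : Type} [Fintype Vt] [DecidableEq Vt]
    (G : SimpleGraph Vt) [DecidableRel G.Adj]
    (U W : Finset Vt) (ε : Sym2 Vt → Bool)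
    (UP VP S : Finset Vt)
    (hUP : UP = U ∪ Finset.univ.filter (fun v => ∃ u, G.Adj v u ∧ ε s(v, u) = true))
    (hVP : VP = W ∪ Finset.univ.filter (fun v => ∃ u, G.Adj v u ∧ ε s(v, u) = false))
    (hS : S = UP ∩ VP) :
    (∀ u ∈ U, ∀ w ∈ W, ∀ p : G.Walk u w, ∃ x ∈ p.support, x ∈ S)
    ∧ sInf {m : ℕ | ∃ T : Finset Vt,
          (∀ u ∈ U, ∀ w ∈ W, ∀ p : G.Walk u w, ∃ x ∈ p.support, x ∈ T)
          ∧ T.card = m}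
        ≤ S.card := by
  have key : ∀ a w, ∀ p : G.Walk a w, a ∈ UP → w ∈ W → ∃ x ∈ p.support, x ∈ S := by
    intro a w p
    induction p with
    | @nil v =>
      intro ha hw
      refine ⟨v, by simp, ?_⟩
      rw [hS, Finset.mem_inter]
      exact ⟨ha, by rw [hVP]; exact Finset.mem_union_left _ hw⟩
    | @cons a b w h q ih =>
      intro ha hw
      cases hε : ε s(a, b) with
      | false =>
        refine ⟨a, by simp, ?_⟩
        rw [hS, Finset.mem_inter]
        refine ⟨ha, ?_⟩
        rw [hVP]
        exact Finset.mem_union_right _ (Finset.mem_filter.mpr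
          ⟨Finset.mem_univ _, b, h, hε⟩)
      | true =>
        have hb : b ∈ UP := by
          rw [hUP]
          refine Finset.mem_union_right _ (Finset.mem_filter.mpr
            ⟨Finset.mem_univ _, a, h.symm, ?_⟩)
          rwa [Sym2.eq_swap]
        obtain ⟨x, hx, hxS⟩ := ih hb hw
        exact ⟨x, by simp [hx], hxS⟩
  have part1 : ∀ u ∈ U, ∀ w ∈ W, ∀ p : G.Walk u w, ∃ x ∈ p.support, x ∈ S := by
    intro u hu w hw p
    exact key u w p (by rw [hUP]; exact Finset.mem_union_left _ hu) hw
  exact ⟨part1, Nat.sInf_le ⟨S, part1, rfl⟩⟩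
end
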